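/- Let Ω ⊆ ℝⁿ be an open convex set, I = {1, …, m}, and for each i ∈ I let f_i : ℝⁿ → ℝ be continuously differentiable on Ω with ∇f_i Lipschitz on Ω with constant L_i, and continuous on the closure of Ω. Define f(p) := max_{i ∈ I} f_i(p). Assume inf_{p ∈ ℝⁿ} f(p) > −∞ and that there is q ∈ ℝⁿ with inf_{p ∈ ℝⁿ} f(p) < f(q) and {p ∈ ℝⁿ : f(p) ≤ f(q)} ⊆ Ω. Let λ̄ > 0 and (λ_k) satisfy max_{i ∈ I} L_i < λ_k ≤ λ̄ for all k, let p⁰ ∈ {p : f(p) ≤ f(q)}, and let (p^k) be a sequence such that for every k, p^{k+1} is a global minimizer over ℝⁿ of p ↦ f(p) + (λ_k/2)·‖p − p^k‖². Then p^k ∈ {p : f(p) ≤ f(q)} for all k, and every accumulation point p̄ of (p^k) is a stationary point of f in the following sense: there exist reals α_i ≥ 0 for i ∈ I(p̄) := {i ∈ I : f_i(p̄) = f(p̄)} with Σ_{i ∈ I(p̄)} α_i = 1 and Σ_{i ∈ I(p̄)} α_i·∇f_i(p̄) = 0. -/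

import Mathlib

/-!
Taking `x = pᵏ` in the proximal inequality shows that `F(pᵏ)` decreases, which keeps the
sequence in the sublevel set of `q`; here `λₖ ≥ 0` because Lipschitz constants on a set with two
distinct points are nonnegative. At an accumulation point `p̄` the values `F(pᵏ)` decrease to
`F(p̄)`, and passing to the limit in the proximal inequality shows that `p̄` minimises
`F + (λ̄/2)‖· - p̄‖²`. Along a ray `p̄ + t d` the quadratic term is `o(t)` and the inactive `fᵢ`
stay below `F(p̄)`, so some active `fᵢ` has `⟪∇fᵢ(p̄), d⟫ ≥ 0`. As this holds for every `d`,
`0` cannot be strictly separated from the convex hull of the active gradients, so it lies in it.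
-/

open Filter Topology
open scoped RealInnerProductSpace

theorem Antitone.le_of_tendsto_comp {α : Type*} [TopologicalSpace α] [Preorder α]
    [OrderClosedTopology α] {u : ℕ → α} (hu : Antitone u) {φ : ℕ → ℕ} (hφ : StrictMono φ)
    {a : α} (h : Tendsto (u ∘ φ) atTop (𝓝 a)) (k : ℕ) : a ≤ u k :=
  ((hu.comp_monotone hφ.monotone).le_of_tendsto h k).trans (hu (hφ.id_le k))

section Proximal

variable {E : Type*} [SeminormedAddCommGroup E]

def IsProximalSequence (F : E → ℝ) (lam : ℕ → ℝ) (p : ℕ → E) : Prop :=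
  ∀ k x, F (p (k + 1)) + lam k / 2 * ‖p (k + 1) - p k‖ ^ 2 ≤ F x + lam k / 2 * ‖x - p k‖ ^ 2

namespace IsProximalSequence

variable {F : E → ℝ} {lam : ℕ → ℝ} {p : ℕ → E}

theorem antitone (hp : IsProximalSequence F lam p) (hlam : ∀ k, 0 ≤ lam k) :
    Antitone (F ∘ p) :=
  antitone_nat_of_succ_le fun k => by
    have hstep := hp k (p k)
    rw [sub_self, norm_zero] at hstep
    have hmove : 0 ≤ lam k / 2 * ‖p (k + 1) - p k‖ ^ 2 := by have := hlam k; positivity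
    show F (p (k + 1)) ≤ F (p k)
    linarith

theorem le_add_sq_of_tendsto (hp : IsProximalSequence F lam p) (hlam : ∀ k, 0 ≤ lam k)
    {Λ : ℝ} (hΛ : ∀ k, lam k ≤ Λ) {x : E} (hle : ∀ k, F x ≤ F (p k)) {φ : ℕ → ℕ}
    (hφ : Tendsto (p ∘ φ) atTop (𝓝 x)) (y : E) :
    F x ≤ F y + Λ / 2 * ‖y - x‖ ^ 2 := by
  have hbound : ∀ s, F x ≤ F y + Λ / 2 * ‖y - p (φ s)‖ ^ 2 := fun s => by
    have hstep := hp (φ s) y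
    have hmove : 0 ≤ lam (φ s) / 2 * ‖p (φ s + 1) - p (φ s)‖ ^ 2 := by have := hlam (φ s); positivity
    have hpenalty : lam (φ s) / 2 * ‖y - p (φ s)‖ ^ 2 ≤ Λ / 2 * ‖y - p (φ s)‖ ^ 2 := by
      gcongr; exact hΛ _
    linarith [hle (φ s + 1)]
  exact ge_of_tendsto' (tendsto_const_nhds.add
    (((tendsto_const_nhds.sub hφ).norm.pow 2).const_mul _)) hbound

end IsProximalSequence

end Proximal

section ConvexHull

theorem exists_weights_of_mem_convexHull_image {ι R M : Type*} [Fintype ι] [Field R]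
    [LinearOrder R] [IsStrictOrderedRing R] [AddCommGroup M] [Module R M] {v : ι → M}
    {s : Set ι} {x : M} (hx : x ∈ convexHull R (v '' s)) :
    ∃ α : ι → R, (∀ i, 0 ≤ α i) ∧ (∀ i ∉ s, α i = 0) ∧ ∑ i, α i = 1 ∧ ∑ i, α i • v i = x := by
  classical
  obtain ⟨κ, _, w, z, hw₀, hw₁, hz, rfl⟩ := mem_convexHull_iff_exists_fintype.1 hx
  choose σ hσs hσz using hz
  refine ⟨fun i => ∑ j with σ j = i, w j, fun i => Finset.sum_nonneg fun j _ => hw₀ j,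
    fun i hi => Finset.sum_eq_zero fun j hj => ?_, (Finset.sum_fiberwise _ _ _).trans hw₁, ?_⟩
  · exact absurd ((Finset.mem_filter.1 hj).2 ▸ hσs j) hi
  · calc ∑ i, (∑ j with σ j = i, w j) • v i = ∑ i, ∑ j with σ j = i, w j • z j := by
          refine Fintype.sum_congr _ _ fun i => ?_
          rw [Finset.sum_smul]
          refine Finset.sum_congr rfl fun j hj => ?_
          rw [← hσz j, (Finset.mem_filter.1 hj).2]
      _ = ∑ j, w j • z j := Finset.sum_fiberwise _ _ _

theorem zero_mem_convexHull_of_forall_exists_inner_nonneg {E : Type*} [NormedAddCommGroup E]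
    [InnerProductSpace ℝ E] [CompleteSpace E] {s : Set E} (hs : s.Finite)
    (h : ∀ d, ∃ v ∈ s, 0 ≤ ⟪v, d⟫) : (0 : E) ∈ convexHull ℝ s := by
  by_contra h₀
  obtain ⟨ℓ, u, hℓ₀, hℓs⟩ := geometric_hahn_banach_point_closed (convex_convexHull ℝ s)
    (hs.isCompact_convexHull ℝ).isClosed h₀
  obtain ⟨v, hv, hvd⟩ := h (-(InnerProductSpace.toDual ℝ E).symm ℓ)
  rw [inner_neg_right, real_inner_comm, InnerProductSpace.toDual_symm_apply] at hvd
  rw [map_zero] at hℓ₀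
  linarith [hℓs v (subset_convexHull ℝ s hv)]

end ConvexHull

section Stationarity

open Finset

variable {ι : Type*} [Fintype ι] [Nonempty ι]

def activeIndices {α : Type*} (f : ι → α → ℝ) (x : α) : Set ι :=
  {i | f i x = univ.sup' univ_nonempty (f · x)}

theorem exists_mem_activeIndices_deriv_nonneg {φ : ι → ℝ → ℝ} {D : ι → ℝ}
    (hφ : ∀ i, HasDerivWithinAt (φ i) (D i) (Set.Ioi 0) 0)
    (hmin : ∀ᶠ t in 𝓝[>] 0, univ.sup' univ_nonempty (φ · 0) ≤ univ.sup' univ_nonempty (φ · t)) :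
    ∃ i ∈ activeIndices φ 0, 0 ≤ D i := by
  by_contra! hneg
  set M := univ.sup' univ_nonempty (φ · 0)
  have hlt : ∀ i, ∀ᶠ t in 𝓝[>] 0, φ i t < M := by
    intro i
    rcases (univ.le_sup' (φ · 0) (mem_univ i)).lt_or_eq with hi | hi
    · exact (hφ i).continuousWithinAt.eventually_lt_const hi
    · have hslope := (hasDerivWithinAt_iff_tendsto_slope' (lt_irrefl 0)).1 (hφ i)
      filter_upwards [hslope.eventually_lt_const (hneg i hi), self_mem_nhdsWithin]
        with t hst (ht : 0 < t)
      rw [slope_def_field, sub_zero, div_lt_iff₀ ht, zero_mul] at hst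
      linarith
  have hsup : ∀ᶠ t in 𝓝[>] 0, univ.sup' univ_nonempty (φ · t) < M :=
    (eventually_all.2 hlt).mono fun t ht => (sup'_lt_iff _).2 fun i _ => ht i
  obtain ⟨t, hle, hgt⟩ := (hmin.and hsup).exists
  exact hle.not_gt hgt

variable {E : Type*} [NormedAddCommGroup E] [InnerProductSpace ℝ E] [CompleteSpace E]
  {f : ι → E → ℝ} {g : ι → E} {x : E} {c : ℝ}

theorem exists_mem_activeIndices_inner_nonneg (hf : ∀ i, HasGradientAt (f i) (g i) x)
    (hmin : ∀ y, univ.sup' univ_nonempty (f · x) ≤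
      univ.sup' univ_nonempty (f · y) + c * ‖y - x‖ ^ 2) (d : E) :
    ∃ i ∈ activeIndices f x, 0 ≤ ⟪g i, d⟫ := by
  set φ : ι → ℝ → ℝ := fun i t => f i (x + t • d) + c * ‖d‖ ^ 2 * t ^ 2
  have hφ₀ : (φ · 0) = (f · x) := by simp [φ]
  have hφ : ∀ i, HasDerivAt (φ i) ⟪g i, d⟫ 0 := by
    intro i
    have hline : HasDerivAt (fun t : ℝ => x + t • d) d 0 := by
      simpa using ((hasDerivAt_id (0 : ℝ)).smul_const d).const_add x
    have hfi : HasFDerivAt (f i) (InnerProductSpace.toDual ℝ E (g i)) (x + (0 : ℝ) • d) := by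
      simpa using (hf i).hasFDerivAt
    refine ((hfi.comp_hasDerivAt 0 hline).add
      ((hasDerivAt_pow 2 (0 : ℝ)).const_mul (c * ‖d‖ ^ 2))).congr_deriv ?_
    simp
  have hφmin : ∀ t, univ.sup' univ_nonempty (φ · 0) ≤ univ.sup' univ_nonempty (φ · t) := by
    intro t
    obtain ⟨j, -, hj⟩ := (le_sup'_iff _).1 (sub_le_iff_le_add.2 (hmin (x + t • d)))
    have hsq : ‖x + t • d - x‖ ^ 2 = ‖d‖ ^ 2 * t ^ 2 := by
      rw [add_sub_cancel_left, norm_smul, Real.norm_eq_abs, mul_pow, sq_abs, mul_comm]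
    rw [hsq] at hj
    refine hφ₀ ▸ le_sup'_of_le _ (mem_univ j) ?_
    simp only [φ]
    linarith
  obtain ⟨i, hi, hD⟩ := exists_mem_activeIndices_deriv_nonneg (fun i => (hφ i).hasDerivWithinAt)
    (.of_forall hφmin)
  exact ⟨i, by simpa [activeIndices, φ] using hi, hD⟩

theorem zero_mem_convexHull_image_activeIndices (hf : ∀ i, HasGradientAt (f i) (g i) x)
    (hmin : ∀ y, univ.sup' univ_nonempty (f · x) ≤
      univ.sup' univ_nonempty (f · y) + c * ‖y - x‖ ^ 2) :
    (0 : E) ∈ convexHull ℝ (g '' activeIndices f x) :=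
  zero_mem_convexHull_of_forall_exists_inner_nonneg (Set.toFinite _) fun d =>
    let ⟨i, hi, hd⟩ := exists_mem_activeIndices_inner_nonneg hf hmin d
    ⟨g i, Set.mem_image_of_mem g hi, hd⟩

end Stationarity

theorem stmt_7 {n : ℕ} {ι : Type*} [Fintype ι] [Nonempty ι]
    (Ω : Set (EuclideanSpace ℝ (Fin n)))
    (f : ι → EuclideanSpace ℝ (Fin n) → ℝ)
    (g : ι → EuclideanSpace ℝ (Fin n) → EuclideanSpace ℝ (Fin n)) (L : ι → ℝ)
    (hdiff : ∀ i, ∀ x ∈ Ω, HasGradientAt (f i) (g i x) x)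
    (hLip : ∀ i, ∀ x ∈ Ω, ∀ y ∈ Ω, ‖g i x - g i y‖ ≤ L i * ‖x - y‖)
    (hfcont : ∀ i, ContinuousOn (f i) (closure Ω))
    (F : EuclideanSpace ℝ (Fin n) → ℝ)
    (hF : ∀ x, F x = Finset.univ.sup' Finset.univ_nonempty fun i => f i x)
    (q : EuclideanSpace ℝ (Fin n)) (hq1 : ∃ x, F x < F q)
    (hq2 : {x | F x ≤ F q} ⊆ Ω)
    (lamUp : ℝ) (lam : ℕ → ℝ)
    (hlam : ∀ k, Finset.univ.sup' Finset.univ_nonempty L < lam k ∧ lam k ≤ lamUp)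
    (p : ℕ → EuclideanSpace ℝ (Fin n)) (hp0 : F (p 0) ≤ F q)
    (hprox : ∀ k, ∀ x, F (p (k + 1)) + lam k / 2 * ‖p (k + 1) - p k‖ ^ 2 ≤
      F x + lam k / 2 * ‖x - p k‖ ^ 2) :
    (∀ k, F (p k) ≤ F q) ∧
    ∀ pbar : EuclideanSpace ℝ (Fin n),
      (∃ φ : ℕ → ℕ, StrictMono φ ∧ Tendsto (fun s => p (φ s)) atTop (nhds pbar)) →
      ∃ α : ι → ℝ, (∀ i, 0 ≤ α i) ∧ (∀ i, f i pbar ≠ F pbar → α i = 0) ∧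
        ∑ i, α i = 1 ∧ ∑ i, α i • g i pbar = 0 := by
  have hp : IsProximalSequence F lam p := hprox
  obtain ⟨x₀, hx₀⟩ := hq1
  have hlam₀ : ∀ k, 0 ≤ lam k := by
    obtain ⟨i⟩ := ‹Nonempty ι›
    have hLi : 0 ≤ L i := nonneg_of_mul_nonneg_left
      ((norm_nonneg _).trans (hLip i x₀ (hq2 hx₀.le) q (hq2 (le_refl (F q)))))
      (norm_pos_iff.2 (sub_ne_zero.2 (ne_of_apply_ne F hx₀.ne)))
    exact fun k => (hLi.trans (Finset.le_sup' L (Finset.mem_univ i))).trans (hlam k).1.le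
  have hsub : ∀ k, F (p k) ≤ F q := fun k => (hp.antitone hlam₀ (Nat.zero_le k)).trans hp0
  refine ⟨hsub, ?_⟩
  rintro pbar ⟨φ, hφ, hlim⟩
  have hpΩ : ∀ k, p k ∈ Ω := fun k => hq2 (hsub k)
  have hFlim : Tendsto (F ∘ p ∘ φ) atTop (𝓝 (F pbar)) := by
    have hFcont : ContinuousOn F (closure Ω) :=
      (ContinuousOn.finset_sup'_apply _ fun i _ => hfcont i).congr fun x _ => hF x
    exact (hFcont pbar (mem_closure_of_tendsto hlim (.of_forall fun s => hpΩ _))).tendsto.comp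
      (tendsto_nhdsWithin_iff.2 ⟨hlim, .of_forall fun s => subset_closure (hpΩ _)⟩)
  have hle : ∀ k, F pbar ≤ F (p k) := (hp.antitone hlam₀).le_of_tendsto_comp hφ hFlim
  have hmin := hp.le_add_sq_of_tendsto hlam₀ (fun k => (hlam k).2) hle hlim
  simp only [hF] at hmin
  have hpbar : pbar ∈ Ω := hq2 ((hle 0).trans hp0)
  obtain ⟨α, hα₀, hα, hα₁, hαg⟩ := exists_weights_of_mem_convexHull_image
    (zero_mem_convexHull_image_activeIndices (fun i => hdiff i pbar hpbar) hmin)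
  exact ⟨α, hα₀, fun i hi => hα i (by simpa [activeIndices, hF] using hi), hα₁, hαg⟩
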